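/- arXiv:1506.00212 — 10 statements merged into one kernel-verified Lean document; each statement's English description precedes it below -/
import Mathlib

section
/- Let 𝐀 be a profinite topological algebra over a continuous signature Ω. For every entourage α of the (unique) uniformity of the compact Hausdorff space A, there exist a finite discrete topological Ω-algebra 𝐁 and a continuous homomorphism φ : 𝐀 → 𝐁 with ker φ ⊆ α. -/
/-- A translation of the `Ω`-algebra `(A, E)`. -/
def IsTranslation {Ω : ℕ → Type} {A : Type} (E : ∀ n, Ω n → (Fin n → A) → A)
    (g : A → A) : Prop :=
  ∃ (n : ℕ) (ω : Ω n) (i : Fin n) (a : Fin n → A),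
    g = fun x => E n ω (Function.update a i x)

/-- Membership in the translation monoid `M(𝐀)`. -/
inductive InTransMonoid {Ω : ℕ → Type} {A : Type} (E : ∀ n, Ω n → (Fin n → A) → A) :
    (A → A) → Prop
  | id : InTransMonoid E (fun x => x)
  | comp {g f : A → A} : IsTranslation E g → InTransMonoid E f → InTransMonoid E (g ∘ f)

/-- A continuous homomorphism from the topological `Ω`-algebra `(A, E)` onto a finite
discrete topological `Ω`-algebra. -/
structure FinQuot (Ω : ℕ → Type) [∀ n, TopologicalSpace (Ω n)]
    (A : Type) [TopologicalSpace A] (E : ∀ n, Ω n → (Fin n → A) → A) where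
  B : Type
  [tB : TopologicalSpace B]
  [finB : Finite B]
  [discB : DiscreteTopology B]
  op : ∀ n, Ω n → (Fin n → B) → B
  contOp : ∀ n, Continuous fun p : Ω n × (Fin n → B) => op n p.1 p.2
  toFun : A → B
  cont : Continuous toFun
  hom : ∀ (n : ℕ) (ω : Ω n) (a : Fin n → A), toFun (E n ω a) = op n ω fun i => toFun (a i)

/-- A topological `Ω`-algebra is profinite if it is compact and residually finite. -/
def IsProfinite (Ω : ℕ → Type) [∀ n, TopologicalSpace (Ω n)]
    (A : Type) [TopologicalSpace A] (E : ∀ n, Ω n → (Fin n → A) → A) : Prop :=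
  CompactSpace A ∧ ∀ x y : A, x ≠ y → ∃ q : FinQuot Ω A E, q.toFun x ≠ q.toFun y


/-- Product of a finite family of finite quotients. -/
def piQuot (Ω : ℕ → Type) [∀ n, TopologicalSpace (Ω n)]
    (A : Type) [TopologicalSpace A] (E : ∀ n, Ω n → (Fin n → A) → A)
    (ι : Type) [Finite ι] (f : ι → FinQuot Ω A E) : FinQuot Ω A E :=
  letI : ∀ i, TopologicalSpace (f i).B := fun i => (f i).tB
  letI : ∀ i, Finite (f i).B := fun i => (f i).finB
  letI : ∀ i, DiscreteTopology (f i).B := fun i => (f i).discB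
  { B := ∀ i, (f i).B
    op := fun n ω b i => (f i).op n ω fun j => b j i
    contOp := fun n => continuous_pi fun i =>
      ((f i).contOp n).comp (continuous_fst.prodMk (continuous_pi fun j =>
        (continuous_apply i).comp ((continuous_apply j).comp continuous_snd)))
    toFun := fun x i => (f i).toFun x
    cont := continuous_pi fun i => (f i).cont
    hom := fun n ω a => funext fun i => (f i).hom n ω a }

/-- In a profinite topological `Ω`-algebra, every entourage of the (unique compatible)
uniformity of the compact Hausdorff carrier contains the kernel of a continuous
homomorphism onto a finite discrete topological `Ω`-algebra. -/
theorem statement4 (Ω : ℕ → Type) [∀ n, TopologicalSpace (Ω n)]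
    (A : Type) [tA : TopologicalSpace A] (E : ∀ n, Ω n → (Fin n → A) → A)
    (hE : ∀ n, Continuous fun p : Ω n × (Fin n → A) => E n p.1 p.2)
    (hprof : IsProfinite Ω A E)
    (u : UniformSpace A) (hu : u.toTopologicalSpace = tA) :
    ∀ α ∈ @uniformity A u, ∃ q : FinQuot Ω A E,
      {p : A × A | q.toFun p.1 = q.toFun p.2} ⊆ α := by
  subst hu
  intro α hα
  obtain ⟨hcomp, hres⟩ := hprof
  haveI := hcomp
  have hK : interior α ∈ uniformity A := interior_mem_uniformity hα
  have hker : ∀ q : FinQuot Ω A E,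
      IsClosed {p : A × A | q.toFun p.1 = q.toFun p.2} := by
    intro q
    letI := q.tB
    letI := q.finB
    letI := q.discB
    exact isClosed_eq (q.cont.comp continuous_fst) (q.cont.comp continuous_snd)
  have hcov : (interior α)ᶜ ⊆
      ⋃ q : FinQuot Ω A E, {p : A × A | q.toFun p.1 = q.toFun p.2}ᶜ := by
    intro p hp
    have hne : p.1 ≠ p.2 := by
      rintro h
      apply hp
      have h2 : (p.1, p.2) ∈ interior α := by
        rw [← h]; exact refl_mem_uniformity hK
      simpa using h2
    obtain ⟨q, hq⟩ := hres p.1 p.2 hne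
    exact Set.mem_iUnion.2 ⟨q, hq⟩
  have hCc : IsCompact ((interior α)ᶜ : Set (A × A)) :=
    isOpen_interior.isClosed_compl.isCompact
  obtain ⟨t, ht⟩ := hCc.elim_finite_subcover _
    (fun q : FinQuot Ω A E => (hker q).isOpen_compl) hcov
  haveI : Fintype {q // q ∈ t} := FinsetCoe.fintype t
  let e : {q // q ∈ t} ≃ Fin (Fintype.card {q // q ∈ t}) := Fintype.equivFin _
  refine ⟨piQuot Ω A E (Fin (Fintype.card {q // q ∈ t})) (fun i => (e.symm i).1), ?_⟩
  intro p hp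
  have hmem : p ∈ interior α := by
    by_contra hpn
    rcases Set.mem_iUnion.1 (ht hpn) with ⟨q, hq⟩
    rcases Set.mem_iUnion.1 hq with ⟨hqt, hq2⟩
    have := congrFun hp (e ⟨q, hqt⟩)
    simp only [piQuot] at this
    rw [Equiv.symm_apply_apply] at this
    exact hq2 this
  exact interior_subset hmem
end

section
/- Let 𝐀 = (A, E) be a compact topological algebra of type Ω and θ a closed congruence of 𝐀. Then the quotient A/θ with its quotient topology is a Hausdorff space and the induced operations E*_n : Ω_n × (A/θ)^n → A/θ, (ω, [a₁], …, [a_n]) ↦ [E_n(ω, a₁, …, a_n)], are continuous; that is, 𝐀/θ is a topological Ω-algebra. -/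
/-- `θ` is a congruence of the `Ω`-algebra `(A, E)`. -/
def IsCongruence {Ω : ℕ → Type} {A : Type} (E : ∀ n, Ω n → (Fin n → A) → A)
    (θ : A → A → Prop) : Prop :=
  Equivalence θ ∧ ∀ (n : ℕ) (ω : Ω n) (a b : Fin n → A),
    (∀ i, θ (a i) (b i)) → θ (E n ω a) (E n ω b)

/-- If `(A, E)` is a compact topological `Ω`-algebra and `θ` a closed congruence, then the
quotient space `A/θ` is Hausdorff and the induced operations are continuous: `𝐀/θ` is a
topological `Ω`-algebra. -/
theorem statement5 (Ω : ℕ → Type) [∀ n, TopologicalSpace (Ω n)]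
    (A : Type) [TopologicalSpace A] [CompactSpace A] [T2Space A]
    (E : ∀ n, Ω n → (Fin n → A) → A)
    (hE : ∀ n, Continuous fun p : Ω n × (Fin n → A) => E n p.1 p.2)
    (θ : A → A → Prop) (hcong : IsCongruence E θ)
    (hclosed : IsClosed {p : A × A | θ p.1 p.2})
    (s : Setoid A) (hs : ∀ a b : A, s.r a b ↔ θ a b) :
    T2Space (Quotient s) ∧
      ∃ E' : ∀ n, Ω n → (Fin n → Quotient s) → Quotient s,
        (∀ (n : ℕ) (ω : Ω n) (a : Fin n → A),
            E' n ω (fun i => Quotient.mk s (a i)) = Quotient.mk s (E n ω a)) ∧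
        ∀ n, Continuous fun p : Ω n × (Fin n → Quotient s) => E' n p.1 p.2 := by
  obtain ⟨heq, hcomp⟩ := hcong
  have hθ : ∀ a b : A, Quotient.mk s a = Quotient.mk s b ↔ θ a b := by
    intro a b
    constructor
    · intro h; exact (hs a b).mp (Quotient.exact h)
    · intro h; exact Quotient.sound ((hs a b).mpr h)
  have hmkcont : Continuous (Quotient.mk s) := continuous_quotient_mk'
  have hqm : Topology.IsQuotientMap (Quotient.mk s) := isQuotientMap_quotient_mk'
  -- saturation of a closed set is closed
  have hsat : ∀ C : Set A, IsClosed C →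
      IsClosed (Quotient.mk s ⁻¹' (Quotient.mk s '' C)) := by
    intro C hC
    have key : Quotient.mk s ⁻¹' (Quotient.mk s '' C) =
        Prod.snd '' ({p : A × A | θ p.1 p.2} ∩ C ×ˢ Set.univ) := by
      ext x
      simp only [Set.mem_preimage, Set.mem_image, Set.mem_inter_iff, Set.mem_setOf_eq,
        Set.mem_prod, Set.mem_univ, and_true, Prod.exists]
      constructor
      · rintro ⟨c, hc, hmk⟩
        exact ⟨c, x, ⟨(hθ c x).mp hmk, hc⟩, rfl⟩
      · rintro ⟨c, y, ⟨hθcy, hc⟩, rfl⟩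
        exact ⟨c, hc, (hθ c y).mpr hθcy⟩
    rw [key]
    have hcompact : IsCompact ({p : A × A | θ p.1 p.2} ∩ C ×ˢ Set.univ) :=
      (hclosed.inter (hC.prod isClosed_univ)).isCompact
    exact (hcompact.image continuous_snd).isClosed
  have hclosedmap : IsClosedMap (Quotient.mk s) := by
    intro C hC
    rw [← hqm.isClosed_preimage]
    exact hsat C hC
  -- T2
  have ht2 : T2Space (Quotient s) := by
    constructor
    intro x y hxy
    induction x using Quotient.inductionOn with | _ a =>
    induction y using Quotient.inductionOn with | _ b =>
    have hab : ¬ θ a b := fun h => hxy ((hθ a b).mpr h)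
    have hF : IsClosed {x | θ a x} := by
      have : {x | θ a x} = (fun x => ((a, x) : A × A)) ⁻¹' {p : A × A | θ p.1 p.2} := rfl
      rw [this]; exact hclosed.preimage (by continuity)
    have hG : IsClosed {x | θ b x} := by
      have : {x | θ b x} = (fun x => ((b, x) : A × A)) ⁻¹' {p : A × A | θ p.1 p.2} := rfl
      rw [this]; exact hclosed.preimage (by continuity)
    have hdisj : Disjoint {x | θ a x} {x | θ b x} := by
      rw [Set.disjoint_left]
      intro c hca hcb
      exact hab (heq.trans hca (heq.symm hcb))
    obtain ⟨U, V, hU, hV, hFU, hGV, hUV⟩ := normal_separation hF hG hdisj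
    refine ⟨(Quotient.mk s '' Uᶜ)ᶜ, (Quotient.mk s '' Vᶜ)ᶜ,
      (hclosedmap _ hU.isClosed_compl).isOpen_compl,
      (hclosedmap _ hV.isClosed_compl).isOpen_compl, ?_, ?_, ?_⟩
    · rintro ⟨c, hc, hmk⟩
      exact hc (hFU (heq.symm ((hθ c a).mp hmk)))
    · rintro ⟨c, hc, hmk⟩
      exact hc (hGV (heq.symm ((hθ c b).mp hmk)))
    · rw [Set.disjoint_left]
      rintro q hqU hqV
      induction q using Quotient.inductionOn with | _ c =>
      by_cases hcU : c ∈ U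
      · by_cases hcV : c ∈ V
        · exact Set.disjoint_left.mp hUV hcU hcV
        · exact hqV ⟨c, hcV, rfl⟩
      · exact hqU ⟨c, hcU, rfl⟩
  refine ⟨ht2, ?_⟩
  -- the induced operations
  refine ⟨fun n ω a => Quotient.mk s (E n ω fun i => (a i).out), ?_, ?_⟩
  · intro n ω a
    apply (hθ _ _).mpr
    apply hcomp
    intro i
    exact (hθ _ _).mp (Quotient.out_eq _)
  · intro n
    haveI : CompactSpace (Quotient s) := Quotient.compactSpace
    have hproper : IsProperMap (Quotient.mk s) := hmkcont.isProperMap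
    have hpi : IsProperMap (fun (x : Fin n → A) i => Quotient.mk s (x i)) :=
      IsProperMap.pi_map fun _ => hproper
    have hg : IsProperMap (Prod.map (id : Ω n → Ω n)
        (fun (x : Fin n → A) i => Quotient.mk s (x i))) :=
      isProperMap_id.prodMap hpi
    have hsurj : Function.Surjective (Prod.map (id : Ω n → Ω n)
        (fun (x : Fin n → A) i => Quotient.mk s (x i))) := by
      rintro ⟨ω, a⟩
      exact ⟨⟨ω, fun i => (a i).out⟩, by
        simp [Prod.map, funext_iff, Quotient.out_eq]⟩
    have hgqm : Topology.IsQuotientMap (Prod.map (id : Ω n → Ω n)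
        (fun (x : Fin n → A) i => Quotient.mk s (x i))) :=
      hg.isClosedMap.isQuotientMap hg.continuous hsurj
    rw [hgqm.continuous_iff]
    have hcompose : ((fun p : Ω n × (Fin n → Quotient s) =>
        Quotient.mk s (E n p.1 fun i => ((p.2) i).out)) ∘
        Prod.map (id : Ω n → Ω n) (fun (x : Fin n → A) i => Quotient.mk s (x i))) =
        fun p : Ω n × (Fin n → A) => Quotient.mk s (E n p.1 p.2) := by
      funext p
      simp only [Function.comp_apply, Prod.map, id]
      apply (hθ _ _).mpr
      apply hcomp
      intro i
      exact (hθ _ _).mp (Quotient.out_eq _)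
    rw [hcompose]
    exact hmkcont.comp (hE n)
end

section
/- A topological algebra 𝐀 = (A, E) of type Ω is profinite if and only if A is a Stone space (totally disconnected compact Hausdorff) and the translation monoid M(𝐀) is equicontinuous with respect to the unique uniformity of A. -/
/-!
If `𝐀` is profinite, the kernels of its finite quotients are clopen equivalence relations on `A`
whose intersection is the diagonal, so by compactness finitely many of them already lie inside
any entourage; as each kernel is invariant under translations, `M(𝐀)` is equicontinuous.

Conversely, given `x ≠ y` in a Stone space, a clopen partition `Q` separates them. The relation
"`f a` and `f b` lie in the same block of `Q` for every `f ∈ M(𝐀)`" is invariant under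
translations, hence a congruence, and equicontinuity makes its classes open. By compactness it
has finitely many classes, so it is the kernel of a finite quotient separating `x` and `y`.
-/

open Set Filter Topology Uniformity

attribute [instance] FinQuot.tB FinQuot.finB FinQuot.discB

theorem exists_finset_biInter_subset_of_mem_nhdsSet {X ι : Type*} [TopologicalSpace X]
    [CompactSpace X] {K : ι → Set X} (hK : ∀ i, IsClosed (K i)) {U : Set X}
    (hU : U ∈ 𝓝ˢ (⋂ i, K i)) : ∃ t : Finset ι, ⋂ i ∈ t, K i ⊆ U := by
  obtain ⟨W, hW, hKW, hWU⟩ := mem_nhdsSet_iff_exists.1 hU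
  obtain ⟨t, ht⟩ := hW.isClosed_compl.isCompact.elim_finite_subfamily_closed K hK
    (subset_empty_iff.1 fun p hp => hp.1 (hKW hp.2))
  exact ⟨t, fun p hp => hWU (by_contra fun hpW => ht.subset ⟨hpW, hp⟩)⟩

theorem Equicontinuous.isOpen_setOf_forall_rel {ι X α : Type*} [TopologicalSpace X]
    [UniformSpace α] {F : ι → X → α} (hF : Equicontinuous F) (s : Setoid α)
    (hs : {p : α × α | s p.1 p.2} ∈ 𝓤 α) (x : X) : IsOpen {y | ∀ i, s (F i x) (F i y)} :=
  isOpen_iff_mem_nhds.2 fun y hy => by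
    filter_upwards [hF y _ hs] with z hz i using s.trans (hy i) (hz i)

theorem DiscreteQuotient.setOf_rel_mem_uniformity {X : Type*} [UniformSpace X] [CompactSpace X]
    (Q : DiscreteQuotient X) : {p : X × X | Q.toSetoid p.1 p.2} ∈ 𝓤 X := by
  rw [← nhdsSet_diagonal_eq_uniformity]
  have hQ : {p : X × X | Q.toSetoid p.1 p.2} = Prod.map Q.proj Q.proj ⁻¹' diagonal Q := by
    ext p
    exact Quotient.eq.symm
  rw [hQ]
  exact ((isOpen_discrete _).preimage (Q.proj_continuous.prodMap Q.proj_continuous)).mem_nhdsSet.2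
    fun p hp => congrArg Q.proj hp

section

variable {Ω : ℕ → Type} {A : Type} {E : ∀ n, Ω n → (Fin n → A) → A}

theorem InTransMonoid.comp_isTranslation {f g : A → A} (hf : InTransMonoid E f)
    (hg : IsTranslation E g) : InTransMonoid E (f ∘ g) := by
  induction hf with
  | id => exact (InTransMonoid.comp hg .id : InTransMonoid E (g ∘ fun x => x))
  | comp hg' _ ih => exact (InTransMonoid.comp hg' ih : InTransMonoid E (_ ∘ (_ ∘ g)))

theorem Setoid.rel_op_of_isTranslation (s : Setoid A)
    (hs : ∀ g, IsTranslation E g → ∀ a b, s a b → s (g a) (g b)) {n : ℕ} (ω : Ω n)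
    {a b : Fin n → A} (hab : ∀ i, s (a i) (b i)) : s (E n ω a) (E n ω b) := by
  classical
  suffices ∀ I : Finset (Fin n), s (E n ω a) (E n ω (I.piecewise b a)) by
    simpa using this Finset.univ
  intro I
  induction I using Finset.induction_on with
  | empty => simp
  | insert i I hi ih =>
    refine s.trans ih ?_
    have hc : I.piecewise b a = Function.update (I.piecewise b a) i (a i) := by
      simp [Finset.piecewise_eq_of_notMem _ _ _ hi]
    rw [Finset.piecewise_insert, hc, Function.update_idem]
    exact hs _ ⟨n, ω, i, I.piecewise b a, rfl⟩ _ _ (hab i)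

/-- The largest congruence of `(A, E)` contained in `s`. -/
def Setoid.transKer (E : ∀ n, Ω n → (Fin n → A) → A) (s : Setoid A) : Setoid A where
  r a b := ∀ f : {f : A → A // InTransMonoid E f}, s (f.1 a) (f.1 b)
  iseqv := ⟨fun _ _ => s.refl _, fun h f => s.symm (h f), fun h₁ h₂ f => s.trans (h₁ f) (h₂ f)⟩

theorem Setoid.transKer_le (s : Setoid A) : s.transKer E ≤ s :=
  fun _ _ h => h ⟨id, .id⟩

theorem Setoid.transKer_rel_op (s : Setoid A) {n : ℕ} (ω : Ω n) {a b : Fin n → A}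
    (hab : ∀ i, s.transKer E (a i) (b i)) : s.transKer E (E n ω a) (E n ω b) :=
  (s.transKer E).rel_op_of_isTranslation
    (fun _ hg _ _ h f => h ⟨_, f.2.comp_isTranslation hg⟩) ω hab

section

variable [∀ n, TopologicalSpace (Ω n)] [TopologicalSpace A]

theorem FinQuot.apply_eq_apply_of_inTransMonoid (q : FinQuot Ω A E) {f : A → A}
    (hf : InTransMonoid E f) {a b : A} (hab : q.toFun a = q.toFun b) :
    q.toFun (f a) = q.toFun (f b) := by
  induction hf with
  | id => exact hab
  | @comp g f hg _ ih =>
    obtain ⟨n, ω, i, c, rfl⟩ := hg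
    show q.toFun (E n ω _) = q.toFun (E n ω _)
    rw [q.hom, q.hom]
    show q.op n ω (q.toFun ∘ _) = q.op n ω (q.toFun ∘ _)
    rw [Function.comp_update, Function.comp_update, ih]

noncomputable def FinQuot.ofDiscreteQuotient [CompactSpace A]
    (hE : ∀ n, Continuous fun p : Ω n × (Fin n → A) => E n p.1 p.2) (Q : DiscreteQuotient A)
    (hQ : ∀ n (ω : Ω n) (a b : Fin n → A), (∀ i, Q.toSetoid (a i) (b i)) →
      Q.toSetoid (E n ω a) (E n ω b)) :
    FinQuot Ω A E where
  B := Q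
  op n ω b := Q.proj (E n ω fun i => (b i).out)
  contOp n := Q.proj_continuous.comp <| (hE n).comp <|
    continuous_fst.prodMk <|
      (continuous_of_discreteTopology (f := fun b : Fin n → Q => fun i => (b i).out)).comp
        continuous_snd
  toFun := Q.proj
  cont := Q.proj_continuous
  hom n ω a := Quotient.sound (s := Q.toSetoid) <|
    hQ n ω _ _ fun i => Q.toSetoid.symm (Quotient.mk_out (s := Q.toSetoid) (a i))

theorem IsProfinite.totallySeparatedSpace (h : IsProfinite Ω A E) : TotallySeparatedSpace A :=
  totallySeparatedSpace_iff_exists_isClopen.2 fun x y hxy =>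
    let ⟨q, hq⟩ := h.2 x y hxy
    ⟨q.toFun ⁻¹' {q.toFun x}, (isClopen_discrete _).preimage q.cont, rfl, Ne.symm hq⟩

end

section

variable [∀ n, TopologicalSpace (Ω n)] [UniformSpace A]

theorem IsProfinite.equicontinuous (h : IsProfinite Ω A E) :
    Equicontinuous fun f : {f : A → A // InTransMonoid E f} => f.1 := by
  have := h.1
  intro x₀ V hV
  have hker : ⋂ q : FinQuot Ω A E, {p : A × A | q.toFun p.1 = q.toFun p.2} = diagonal A := by
    ext ⟨a, b⟩
    simp only [mem_iInter, mem_diagonal_iff]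
    refine ⟨fun hab => by_contra fun hne => ?_, fun hab q => hab ▸ rfl⟩
    obtain ⟨q, hq⟩ := h.2 a b hne
    exact hq (hab q)
  obtain ⟨t, ht⟩ := exists_finset_biInter_subset_of_mem_nhdsSet
    (K := fun q : FinQuot Ω A E => {p : A × A | q.toFun p.1 = q.toFun p.2})
    (fun q => isClosed_eq (q.cont.comp continuous_fst) (q.cont.comp continuous_snd))
    (by rwa [hker, nhdsSet_diagonal_eq_uniformity])
  have hnear : ∀ᶠ x in 𝓝 x₀, ∀ q ∈ t, q.toFun x₀ = q.toFun x :=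
    (eventually_all_finset t).2 fun q _ =>
      (tendsto_pure.1 (nhds_discrete q.B ▸ q.cont.tendsto x₀)).mono fun _ hx => hx.symm
  filter_upwards [hnear] with x hx f
  exact ht (mem_iInter₂.2 fun q hq => q.apply_eq_apply_of_inTransMonoid f.2 (hx q hq))

theorem isProfinite_of_equicontinuous [CompactSpace A] [T2Space A]
    [TotallyDisconnectedSpace A] (hE : ∀ n, Continuous fun p : Ω n × (Fin n → A) => E n p.1 p.2)
    (hM : Equicontinuous fun f : {f : A → A // InTransMonoid E f} => f.1) :
    IsProfinite Ω A E := by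
  refine ⟨‹_›, fun x y hxy => ?_⟩
  obtain ⟨Q₀, hQ₀⟩ : ∃ Q : DiscreteQuotient A, Q.proj x ≠ Q.proj y := by
    by_contra! h
    exact hxy (DiscreteQuotient.eq_of_forall_proj_eq h)
  let Q : DiscreteQuotient A :=
    ⟨Q₀.toSetoid.transKer E, hM.isOpen_setOf_forall_rel _ Q₀.setOf_rel_mem_uniformity⟩
  refine ⟨.ofDiscreteQuotient hE Q fun n ω _ _ => Q₀.toSetoid.transKer_rel_op ω, fun h => ?_⟩
  exact hQ₀ (Quotient.sound (Q₀.toSetoid.transKer_le (Quotient.exact h)))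

end

end

/-- A topological `Ω`-algebra `𝐀 = (A, E)` is profinite iff `A` is a Stone space (compact,
Hausdorff, totally disconnected) and the translation monoid `M(𝐀)` is equicontinuous with
respect to the unique compatible uniformity on `A`. -/
theorem statement6 (Ω : ℕ → Type) [∀ n, TopologicalSpace (Ω n)]
    (A : Type) [tA : TopologicalSpace A] (E : ∀ n, Ω n → (Fin n → A) → A)
    (hE : ∀ n, Continuous fun p : Ω n × (Fin n → A) => E n p.1 p.2) :
    IsProfinite Ω A E ↔
      (CompactSpace A ∧ T2Space A ∧ TotallyDisconnectedSpace A ∧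
        ∀ u : UniformSpace A, u.toTopologicalSpace = tA →
          @Equicontinuous {f : A → A // InTransMonoid E f} A A tA u
            (fun f => (f : {f : A → A // InTransMonoid E f}).1)) := by
  constructor
  · intro h
    have := h.totallySeparatedSpace
    refine ⟨h.1, inferInstance, inferInstance, fun u hu => ?_⟩
    subst hu
    exact h.equicontinuous
  · rintro ⟨hC, hT2, hTD, hM⟩
    let := uniformSpaceOfCompactR1 (γ := A)
    exact isProfinite_of_equicontinuous hE (hM _ rfl)
end

section
/- Every semiring (R, +, ·) (with + commutative and associative, · associative, and both distributive laws) is affinely bounded by 3: every unary linear polynomial function on R equals one of x ↦ ((a·x)·b)+c, x ↦ (a·x)+b, x ↦ (x·a)+b, x ↦ x+a, x ↦ (a·x)·b, x ↦ a·x, x ↦ x·a, or x ↦ x, for suitable a, b, c ∈ R. -/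
/-- Linear polynomial terms in one variable `x` over `{+, ·}` with constants from `R`. -/
inductive SRTerm (R : Type*) : Type _
  | var : SRTerm R
  | const : R → SRTerm R
  | add : SRTerm R → SRTerm R → SRTerm R
  | mul : SRTerm R → SRTerm R → SRTerm R

namespace SRTerm

/-- Number of occurrences of the variable `x`. -/
def varCount {R : Type*} : SRTerm R → ℕ
  | .var => 1
  | .const _ => 0
  | .add s t => varCount s + varCount t
  | .mul s t => varCount s + varCount t

/-- Evaluation of a term as a unary function on `R`. -/
def eval {R : Type*} [Add R] [Mul R] : SRTerm R → R → R
  | .var, x => x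
  | .const a, _ => a
  | .add s t, x => eval s x + eval t x
  | .mul s t, x => eval s x * eval t x

end SRTerm

section Aux

variable {R : Type*} [AddCommSemigroup R] [Semigroup R]

/-- Normal form evaluator: optional left factor, right factor and additive constant. -/
def sh (a b c : Option R) (x : R) : R :=
  match c with
  | none =>
    (match b with
     | none => (match a with | none => x | some a => a * x)
     | some b => (match a with | none => x | some a => a * x) * b)
  | some c =>
    (match b with
     | none => (match a with | none => x | some a => a * x)
     | some b => (match a with | none => x | some a => a * x) * b) + c

lemma constEval (t : SRTerm R) (h : t.varCount = 0) : ∃ k : R, ∀ x, t.eval x = k := by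
  induction t with
  | var => simp [SRTerm.varCount] at h
  | const a => exact ⟨a, fun _ => rfl⟩
  | add s u ihs ihu =>
    simp [SRTerm.varCount] at h
    obtain ⟨hs0, hu0⟩ : s.varCount = 0 ∧ u.varCount = 0 := by omega
    obtain ⟨ks, hs⟩ := ihs hs0
    obtain ⟨ku, hu⟩ := ihu hu0
    exact ⟨ks + ku, fun x => by simp [SRTerm.eval, hs, hu]⟩
  | mul s u ihs ihu =>
    simp [SRTerm.varCount] at h
    obtain ⟨hs0, hu0⟩ : s.varCount = 0 ∧ u.varCount = 0 := by omega
    obtain ⟨ks, hs⟩ := ihs hs0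
    obtain ⟨ku, hu⟩ := ihu hu0
    exact ⟨ks * ku, fun x => by simp [SRTerm.eval, hs, hu]⟩

lemma linEval (hdl : ∀ x y z : R, x * (y + z) = x * y + x * z)
    (hdr : ∀ x y z : R, (x + y) * z = x * z + y * z)
    (t : SRTerm R) (ht : t.varCount = 1) :
    ∃ a b c : Option R, ∀ x, t.eval x = sh a b c x := by
  induction t with
  | var => exact ⟨none, none, none, fun x => rfl⟩
  | const a => simp [SRTerm.varCount] at ht
  | add s u ihs ihu =>
    simp [SRTerm.varCount] at ht
    rcases (by omega : s.varCount = 1 ∧ u.varCount = 0 ∨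
        s.varCount = 0 ∧ u.varCount = 1) with ⟨h1, h0⟩ | ⟨h0, h1⟩
    · obtain ⟨a, b, c, hs⟩ := ihs h1
      obtain ⟨k, hu⟩ := constEval u h0
      refine ⟨a, b, some (match c with | none => k | some c => c + k), fun x => ?_⟩
      simp only [SRTerm.eval, hs, hu]
      cases c <;> simp [sh, add_assoc]
    · obtain ⟨a, b, c, hu⟩ := ihu h1
      obtain ⟨k, hs⟩ := constEval s h0
      refine ⟨a, b, some (match c with | none => k | some c => k + c), fun x => ?_⟩
      cases c with
      | none => simp only [SRTerm.eval, hs, hu, sh]; exact add_comm k _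
      | some c => simp only [SRTerm.eval, hs, hu, sh]; rw [add_left_comm]
  | mul s u ihs ihu =>
    simp [SRTerm.varCount] at ht
    rcases (by omega : s.varCount = 1 ∧ u.varCount = 0 ∨
        s.varCount = 0 ∧ u.varCount = 1) with ⟨h1, h0⟩ | ⟨h0, h1⟩
    · obtain ⟨a, b, c, hs⟩ := ihs h1
      obtain ⟨k, hu⟩ := constEval u h0
      refine ⟨a, some (match b with | none => k | some b => b * k),
        c.map (· * k), fun x => ?_⟩
      simp only [SRTerm.eval, hs, hu]
      cases a <;> cases b <;> cases c <;> simp [sh, hdr, mul_assoc]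
    · obtain ⟨a, b, c, hu⟩ := ihu h1
      obtain ⟨k, hs⟩ := constEval s h0
      refine ⟨some (match a with | none => k | some a => k * a), b,
        c.map (k * ·), fun x => ?_⟩
      simp only [SRTerm.eval, hs, hu]
      cases a <;> cases b <;> cases c <;> simp [sh, hdl, mul_assoc]

end Aux

/-- Every semiring (`+` commutative and associative, `·` associative, both distributive
laws; no units assumed) is affinely bounded by `3`: every unary linear polynomial
function equals one of the eight listed forms. -/
theorem statement12 {R : Type*} [AddCommSemigroup R] [Semigroup R]
    (hdl : ∀ x y z : R, x * (y + z) = x * y + x * z)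
    (hdr : ∀ x y z : R, (x + y) * z = x * z + y * z)
    (t : SRTerm R) (ht : t.varCount = 1) :
    (∃ a b c : R, ∀ x, t.eval x = a * x * b + c) ∨
      (∃ a b : R, ∀ x, t.eval x = a * x + b) ∨
      (∃ a b : R, ∀ x, t.eval x = x * a + b) ∨
      (∃ a : R, ∀ x, t.eval x = x + a) ∨
      (∃ a b : R, ∀ x, t.eval x = a * x * b) ∨
      (∃ a : R, ∀ x, t.eval x = a * x) ∨
      (∃ a : R, ∀ x, t.eval x = x * a) ∨
      (∀ x, t.eval x = x) := by
  obtain ⟨a, b, c, h⟩ := linEval hdl hdr t ht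
  cases a with
  | some a =>
    cases b with
    | some b =>
      cases c with
      | some c => exact Or.inl ⟨a, b, c, fun x => by simpa [sh] using h x⟩
      | none => exact Or.inr (Or.inr (Or.inr (Or.inr (Or.inl
          ⟨a, b, fun x => by simpa [sh] using h x⟩))))
    | none =>
      cases c with
      | some c => exact Or.inr (Or.inl ⟨a, c, fun x => by simpa [sh] using h x⟩)
      | none => exact Or.inr (Or.inr (Or.inr (Or.inr (Or.inr (Or.inl
          ⟨a, fun x => by simpa [sh] using h x⟩)))))
  | none =>
    cases b with
    | some b =>
      cases c with
      | some c => exact Or.inr (Or.inr (Or.inl ⟨b, c, fun x => by simpa [sh] using h x⟩))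
      | none => exact Or.inr (Or.inr (Or.inr (Or.inr (Or.inr (Or.inr (Or.inl
          ⟨b, fun x => by simpa [sh] using h x⟩))))))
    | none =>
      cases c with
      | some c => exact Or.inr (Or.inr (Or.inr (Or.inl ⟨c, fun x => by simpa [sh] using h x⟩)))
      | none => exact Or.inr (Or.inr (Or.inr (Or.inr (Or.inr (Or.inr (Or.inr
          (fun x => by simpa [sh] using h x)))))))
end

section
/- A topological semiring (R, +, ·), whose operations are continuous, is profinite (representable as a projective limit of finite discrete semirings, equivalently residually finite and compact) if and only if R is a totally disconnected compact Hausdorff space. -/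
/-!
A continuous homomorphism onto a finite discrete semiring has clopen fibres, so residual
finiteness separates points by clopen sets. Conversely, in a compact totally disconnected
Hausdorff semiring two points are separated by a clopen set `U`, and the syntactic congruence
of `U` (`x ~ y` iff every unary polynomial `a + b * x * c`, with any of `a`, `b`, `c` possibly
absent, sends `x` and `y` both into `U` or both outside it) separates them too. The unary
polynomials form a compact family depending continuously on their coefficients, so by the tube
lemma `x ↦ {p | p x ∈ U}` is locally constant: the congruence has finitely many open classes.
-/

open Filter Topology

theorem IsClopen.isLocallyConstant_slice {X Y : Type*} [TopologicalSpace X] [TopologicalSpace Y]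
    [CompactSpace X] {V : Set (X × Y)} (hV : IsClopen V) :
    IsLocallyConstant fun y => {x | (x, y) ∈ V} := by
  have mem_iff : ∀ p, ∀ᶠ q in 𝓝 p, q ∈ V ↔ p ∈ V := fun p => by
    by_cases hp : p ∈ V
    · filter_upwards [hV.isOpen.mem_nhds hp] with q hq using iff_of_true hq hp
    · filter_upwards [hV.compl.isOpen.mem_nhds hp] with q hq using iff_of_false hq hp
  refine (IsLocallyConstant.iff_eventually_eq _).2 fun y₀ => ?_
  have slice_eq := isCompact_univ.eventually_forall_of_forall_eventually (x₀ := y₀)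
    (P := fun y x => (x, y) ∈ V ↔ (x, y₀) ∈ V) fun x _ => by
      have near := (continuous_swap.tendsto (y₀, x)).eventually (mem_iff (x, y₀))
      have near₀ := ((continuous_snd.prodMk continuous_const).tendsto (y₀, x)).eventually
        (mem_iff (x, y₀))
      filter_upwards [near, near₀] with z hz hz₀
      exact hz.trans hz₀.symm
  filter_upwards [slice_eq] with y hy
  ext x
  exact hy x trivial

theorem totallySeparatedSpace_of_isLocallyConstant_separating {X : Type*} [TopologicalSpace X]
    (h : ∀ x y : X, x ≠ y → ∃ (B : Type) (f : X → B), IsLocallyConstant f ∧ f x ≠ f y) :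
    TotallySeparatedSpace X :=
  totallySeparatedSpace_iff_exists_isClopen.2 fun x y hxy => by
    obtain ⟨B, f, hf, hfxy⟩ := h x y hxy
    exact ⟨{z | f z = f x}, hf.isClopen_fiber _, rfl, fun hy => hfxy hy.symm⟩

def Sum.elimId {X Y : Type*} (f : X → Y → Y) : X ⊕ Unit → Y → Y :=
  Sum.elim f fun _ => id

theorem Continuous.uncurry_sumElimId {X Y : Type*} [TopologicalSpace X] [TopologicalSpace Y]
    {f : X → Y → Y} (hf : Continuous (Function.uncurry f)) :
    Continuous (Function.uncurry (Sum.elimId f)) := by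
  have : Function.uncurry (Sum.elimId f) =
      Sum.elim (Function.uncurry f) Prod.snd ∘ Homeomorph.sumProdDistrib := by
    funext ⟨s, y⟩
    cases s <;> rfl
  rw [this]
  exact (hf.sumElim continuous_snd).comp Homeomorph.sumProdDistrib.continuous

instance RingCon.instLeftDistribClassQuotient {R : Type*} [Add R] [Mul R] [LeftDistribClass R]
    (c : RingCon R) : LeftDistribClass c.Quotient where
  left_distrib a b d := Quotient.inductionOn₃ a b d fun a b d =>
    congrArg ((↑) : R → c.Quotient) (left_distrib a b d)

instance RingCon.instRightDistribClassQuotient {R : Type*} [Add R] [Mul R] [RightDistribClass R]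
    (c : RingCon R) : RightDistribClass c.Quotient where
  right_distrib a b d := Quotient.inductionOn₃ a b d fun a b d =>
    congrArg ((↑) : R → c.Quotient) (right_distrib a b d)

/-- The coefficients of a unary polynomial `x ↦ a + b * x * c` over a semiring without `0` and
`1`, where each of `a`, `b`, `c` may be absent (`Sum.inr ()`). -/
abbrev UnaryPoly (R : Type*) := (R ⊕ Unit) × (R ⊕ Unit) × (R ⊕ Unit)

namespace UnaryPoly

variable {R : Type*}

section Eval

variable [Mul R]

def sandwich (b c : R ⊕ Unit) (x : R) : R :=
  Sum.elimId (· * ·) b (Sum.elimId (fun c y => y * c) c x)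

variable [Add R]

def eval (q : UnaryPoly R) (x : R) : R :=
  Sum.elimId (· + ·) q.1 (sandwich q.2.1 q.2.2 x)

def contextSet (U : Set R) (x : R) : Set (UnaryPoly R) :=
  {q | eval q x ∈ U}

variable [TopologicalSpace R] [ContinuousAdd R] [ContinuousMul R]

theorem continuous_eval : Continuous fun p : UnaryPoly R × R => eval p.1 p.2 := by
  have hadd : Continuous (Function.uncurry (Sum.elimId ((· + ·) : R → R → R))) :=
    Continuous.uncurry_sumElimId continuous_add
  have hmul : Continuous (Function.uncurry (Sum.elimId ((· * ·) : R → R → R))) :=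
    Continuous.uncurry_sumElimId continuous_mul
  have hmul' : Continuous (Function.uncurry (Sum.elimId fun c y : R => y * c)) :=
    Continuous.uncurry_sumElimId (continuous_snd.mul continuous_fst)
  exact hadd.comp <| continuous_fst.fst.prodMk <| hmul.comp <| continuous_fst.snd.fst.prodMk <|
    hmul'.comp <| continuous_fst.snd.snd.prodMk continuous_snd

theorem isLocallyConstant_contextSet [CompactSpace R] {U : Set R} (hU : IsClopen U) :
    IsLocallyConstant (contextSet U) :=
  (hU.preimage continuous_eval).isLocallyConstant_slice

end Eval

section AddLeft

variable [AddSemigroup R] [Mul R] [LeftDistribClass R] [RightDistribClass R]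

theorem sandwich_add (b c : R ⊕ Unit) (x y : R) :
    sandwich b c (x + y) = sandwich b c x + sandwich b c y := by
  cases b <;> cases c <;> simp [sandwich, Sum.elimId, mul_add, add_mul]

theorem eval_add_left (q : UnaryPoly R) (z x : R) :
    eval q (z + x) = eval (.inl (eval q z), q.2) x := by
  rcases q with ⟨a | _, b, c⟩ <;> simp [eval, sandwich_add, Sum.elimId, add_assoc]

theorem contextSet_add_left (U : Set R) (z x : R) :
    contextSet U (z + x) = (fun q => (.inl (eval q z), q.2)) ⁻¹' contextSet U x := by
  ext q
  simp only [contextSet, Set.mem_ofPred_eq, Set.mem_preimage, eval_add_left]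

end AddLeft

section Mul

variable [Semigroup R]

theorem sandwich_mul_left (b c : R ⊕ Unit) (z x : R) :
    sandwich b c (z * x) = sandwich (.inl (Sum.elimId (· * ·) b z)) c x := by
  cases b <;> cases c <;> simp [sandwich, Sum.elimId, mul_assoc]

theorem sandwich_mul_right (b c : R ⊕ Unit) (x z : R) :
    sandwich b c (x * z) = sandwich b (.inl (Sum.elimId (fun c y => y * c) c z)) x := by
  cases b <;> cases c <;> simp [sandwich, Sum.elimId, mul_assoc]

variable [Add R]

theorem contextSet_mul_left (U : Set R) (z x : R) :
    contextSet U (z * x) =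
      (fun q => (q.1, .inl (Sum.elimId (· * ·) q.2.1 z), q.2.2)) ⁻¹' contextSet U x := by
  ext q
  simp only [contextSet, Set.mem_ofPred_eq, Set.mem_preimage, eval, sandwich_mul_left]

theorem contextSet_mul_right (U : Set R) (x z : R) :
    contextSet U (x * z) =
      (fun q => (q.1, q.2.1, .inl (Sum.elimId (fun c y => y * c) q.2.2 z))) ⁻¹'
        contextSet U x := by
  ext q
  simp only [contextSet, Set.mem_ofPred_eq, Set.mem_preimage, eval, sandwich_mul_right]

end Mul

end UnaryPoly

open UnaryPoly

section Syntactic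

variable {R : Type*} [AddCommSemigroup R] [Semigroup R] [LeftDistribClass R] [RightDistribClass R]

def syntacticCon (U : Set R) : RingCon R where
  toSetoid := Setoid.ker (contextSet U)
  add' {a b c d} (hab : contextSet U a = contextSet U b)
      (hcd : contextSet U c = contextSet U d) := by
    show contextSet U (a + c) = contextSet U (b + d)
    rw [contextSet_add_left, hcd, ← contextSet_add_left, add_comm a, add_comm b,
      contextSet_add_left, hab, ← contextSet_add_left]
  mul' {a b c d} (hab : contextSet U a = contextSet U b)
      (hcd : contextSet U c = contextSet U d) := by
    show contextSet U (a * c) = contextSet U (b * d)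
    rw [contextSet_mul_left, hcd, ← contextSet_mul_left, contextSet_mul_right, hab,
      ← contextSet_mul_right]

theorem mem_iff_of_syntacticCon {U : Set R} {x y : R} (h : syntacticCon U x y) :
    x ∈ U ↔ y ∈ U :=
  Set.ext_iff.1 h (.inr (), .inr (), .inr ())

variable [TopologicalSpace R] [ContinuousAdd R] [ContinuousMul R] [CompactSpace R]

theorem finite_quotient_syntacticCon {U : Set R} (hU : IsClopen U) :
    Finite (syntacticCon U).Quotient :=
  have := (isLocallyConstant_contextSet hU).range_finite.to_subtype
  .of_equiv _ (Setoid.quotientKerEquivRange _).symm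

theorem isLocallyConstant_coe_syntacticCon {U : Set R} (hU : IsClopen U) :
    IsLocallyConstant ((↑) : R → (syntacticCon U).Quotient) :=
  .desc _ (Setoid.kerLift (contextSet U)) (isLocallyConstant_contextSet hU)
    (Setoid.kerLift_injective _)

theorem exists_ringCon_finite_isLocallyConstant_separating [T2Space R]
    [TotallyDisconnectedSpace R] {x y : R} (hxy : x ≠ y) :
    ∃ c : RingCon R, Finite c.Quotient ∧ IsLocallyConstant ((↑) : R → c.Quotient) ∧
      (x : c.Quotient) ≠ y := by
  obtain ⟨U, hU, hxU, hyU⟩ := exists_isClopen_of_totally_separated hxy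
  refine ⟨syntacticCon U, finite_quotient_syntacticCon hU,
    isLocallyConstant_coe_syntacticCon hU, fun h => hyU ?_⟩
  exact (mem_iff_of_syntacticCon (RingCon.eq _ |>.1 h)).1 hxU

end Syntactic

/-- A topological semiring (a space with continuous associative `+` and `·`, `+`
commutative, and both distributive laws) is profinite — i.e. compact and residually
finite via continuous semiring homomorphisms onto finite discrete semirings — iff it is a
totally disconnected compact Hausdorff space. -/
theorem statement13 (R : Type) [tR : TopologicalSpace R]
    (add : R → R → R) (mul : R → R → R)
    (haddA : ∀ x y z : R, add (add x y) z = add x (add y z))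
    (haddC : ∀ x y : R, add x y = add y x)
    (hmulA : ∀ x y z : R, mul (mul x y) z = mul x (mul y z))
    (hdl : ∀ x y z : R, mul x (add y z) = add (mul x y) (mul x z))
    (hdr : ∀ x y z : R, mul (add x y) z = add (mul x z) (mul y z))
    (hca : Continuous fun p : R × R => add p.1 p.2)
    (hcm : Continuous fun p : R × R => mul p.1 p.2) :
    (CompactSpace R ∧ ∀ x y : R, x ≠ y →
        ∃ (B : Type) (addB : B → B → B) (mulB : B → B → B) (φ : R → B),
          Finite B ∧
          (∀ x y z : B, addB (addB x y) z = addB x (addB y z)) ∧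
          (∀ x y : B, addB x y = addB y x) ∧
          (∀ x y z : B, mulB (mulB x y) z = mulB x (mulB y z)) ∧
          (∀ x y z : B, mulB x (addB y z) = addB (mulB x y) (mulB x z)) ∧
          (∀ x y z : B, mulB (addB x y) z = addB (mulB x z) (mulB y z)) ∧
          @Continuous R B tR ⊥ φ ∧
          (∀ x y : R, φ (add x y) = addB (φ x) (φ y)) ∧
          (∀ x y : R, φ (mul x y) = mulB (φ x) (φ y)) ∧
          φ x ≠ φ y) ↔
      (CompactSpace R ∧ T2Space R ∧ TotallyDisconnectedSpace R) := by
  let : AddCommSemigroup R := { add, add_assoc := haddA, add_comm := haddC }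
  let : Semigroup R := { mul, mul_assoc := hmulA }
  have : LeftDistribClass R := ⟨hdl⟩
  have : RightDistribClass R := ⟨hdr⟩
  have : ContinuousAdd R := ⟨hca⟩
  have : ContinuousMul R := ⟨hcm⟩
  constructor
  · rintro ⟨hc, hsep⟩
    have : TotallySeparatedSpace R := totallySeparatedSpace_of_isLocallyConstant_separating
      fun x y hxy => by
        obtain ⟨B, -, -, φ, -, -, -, -, -, -, hφ, -, -, hφxy⟩ := hsep x y hxy
        exact ⟨B, φ,
          (@IsLocallyConstant.iff_continuous R B _ ⊥ (discreteTopology_bot B) φ).2 hφ, hφxy⟩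
    exact ⟨hc, inferInstance, inferInstance⟩
  · rintro ⟨hc, _, _⟩
    refine ⟨hc, fun x y hxy => ?_⟩
    obtain ⟨c, hfin, hlc, hcxy⟩ := exists_ringCon_finite_isLocallyConstant_separating hxy
    exact ⟨c.Quotient, (· + ·), (· * ·), (↑), hfin, add_assoc, add_comm, mul_assoc,
      left_distrib, right_distrib, @IsLocallyConstant.continuous _ _ _ ⊥ _ hlc,
      RingCon.coe_add c, RingCon.coe_mul c, hcxy⟩
end

section
/- Let R be a compact Hausdorff topological semiring and M a topological semimodule over R (with continuous addition and continuous scalar action). Then M is profinite if and only if M is a totally disconnected compact Hausdorff space. -/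
/-!
A continuous map into a discrete space that separates two points yields a clopen set separating
them, so a profinite semimodule is totally separated. Conversely, two points of a compact totally
disconnected Hausdorff space are separated by a clopen set `U`. Identify `x` and `y` when
`c x ∈ U ↔ c y ∈ U` for every context `c` of the form `x`, `x + a`, `r • x` or `r • x + a`; these
contexts are closed under adding and scaling, so this is a congruence, and the quotient is a
semimodule still separating the two points. Each family of contexts is parametrised by a compact
space (`M`, `R`, `R × M`), so the tube lemma makes the classes open, and by compactness of `M`
there are finitely many of them.
-/

open Filter Topology

theorem totallySeparatedSpace_of_forall_ne_exists_continuous_bot {X : Type*}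
    [TopologicalSpace X]
    (h : ∀ x y : X, x ≠ y → ∃ (N : Type*) (φ : X → N), @Continuous X N _ ⊥ φ ∧ φ x ≠ φ y) :
    TotallySeparatedSpace X := by
  refine totallySeparatedSpace_iff_exists_isClopen.mpr fun x y hxy => ?_
  obtain ⟨N, φ, hφ, hne⟩ := h x y hxy
  let : TopologicalSpace N := ⊥
  have : DiscreteTopology N := ⟨rfl⟩
  exact ⟨φ ⁻¹' {φ x}, (isClopen_discrete _).preimage hφ, rfl, fun hy => hne hy.symm⟩

namespace DiscreteQuotient

variable {K X : Type*} [TopologicalSpace K] [TopologicalSpace X] [CompactSpace K]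

theorem eventually_forall_mem_iff_of_isClopen {W : Set (K × X)} (hW : IsClopen W) (x : X) :
    ∀ᶠ y in 𝓝 x, ∀ k, (k, x) ∈ W ↔ (k, y) ∈ W := by
  have slice : ∀ {V : Set (K × X)}, IsClopen V → ∀ᶠ y in 𝓝 x, ∀ k, (k, x) ∈ V → (k, y) ∈ V :=
    fun {V} hV => (hV.1.preimage (Continuous.prodMk_left x)).isCompact
      |>.eventually_forall_of_forall_eventually fun k hk =>
        continuous_swap.continuousAt.preimage_mem_nhds (hV.2.mem_nhds hk)
  filter_upwards [slice hW, slice hW.compl] with y hxy hyx k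
  exact ⟨hxy k, fun hy => not_not.mp fun hx => hyx k hx hy⟩

def ofIsClopenSlices {W : Set (K × X)} (hW : IsClopen W) : DiscreteQuotient X where
  toSetoid := ⟨fun x y => ∀ k, (k, x) ∈ W ↔ (k, y) ∈ W,
    ⟨fun _ _ => Iff.rfl, fun h k => (h k).symm, fun h h' k => (h k).trans (h' k)⟩⟩
  isOpen_setOfPred_rel _ := isOpen_iff_mem_nhds.mpr fun _ hy =>
    (eventually_forall_mem_iff_of_isClopen hW _).mono fun _ hz k => (hy k).trans (hz k)

end DiscreteQuotient

section Syntactic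

open DiscreteQuotient

variable {R M : Type*} [TopologicalSpace R] [TopologicalSpace M] [CompactSpace R] [CompactSpace M]
  {add : M → M → M} {smul : R → M → M}
  (hadd : Continuous fun p : M × M => add p.1 p.2)
  (hsmul : Continuous fun p : R × M => smul p.1 p.2) {U : Set M} (hU : IsClopen U)

def syntacticQuotient : DiscreteQuotient M :=
  ofIsClopen hU ⊓ ofIsClopenSlices (hU.preimage (hadd.comp continuous_swap)) ⊓
    ofIsClopenSlices (hU.preimage hsmul) ⊓
    ofIsClopenSlices (hU.preimage (hadd.comp ((hsmul.comp
      (continuous_fst.fst.prodMk continuous_snd)).prodMk continuous_fst.snd)))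

variable {hadd hsmul hU}

theorem syntacticQuotient_rel_iff {x y : M} :
    (syntacticQuotient hadd hsmul hU).toSetoid x y ↔
      (x ∈ U ↔ y ∈ U) ∧ (∀ a, add x a ∈ U ↔ add y a ∈ U) ∧
        (∀ r, smul r x ∈ U ↔ smul r y ∈ U) ∧
          ∀ r a, add (smul r x) a ∈ U ↔ add (smul r y) a ∈ U :=
  ⟨fun ⟨⟨⟨h₀, h₁⟩, h₂⟩, h₃⟩ => ⟨h₀, h₁, h₂, fun r a => h₃ (r, a)⟩,
    fun ⟨h₀, h₁, h₂, h₃⟩ => ⟨⟨⟨h₀, h₁⟩, h₂⟩, fun p => h₃ p.1 p.2⟩⟩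

theorem syntacticQuotient_rel_add_right
    (hassoc : ∀ x y z, add (add x y) z = add x (add y z))
    (hsmul_add : ∀ r x y, smul r (add x y) = add (smul r x) (smul r y))
    {x y : M} (h : (syntacticQuotient hadd hsmul hU).toSetoid x y) (z : M) :
    (syntacticQuotient hadd hsmul hU).toSetoid (add x z) (add y z) := by
  obtain ⟨-, hadd', -, hsmul_add'⟩ := syntacticQuotient_rel_iff.mp h
  refine syntacticQuotient_rel_iff.mpr ⟨hadd' z, fun a => ?_, fun r => ?_, fun r a => ?_⟩
  · simpa only [hassoc] using hadd' (add z a)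
  · simpa only [hsmul_add] using hsmul_add' r (smul r z)
  · simpa only [hsmul_add, hassoc] using hsmul_add' r (add (smul r z) a)

theorem syntacticQuotient_rel_add
    (hassoc : ∀ x y z, add (add x y) z = add x (add y z)) (hcomm : ∀ x y, add x y = add y x)
    (hsmul_add : ∀ r x y, smul r (add x y) = add (smul r x) (smul r y))
    {x x' y y' : M} (hx : (syntacticQuotient hadd hsmul hU).toSetoid x x')
    (hy : (syntacticQuotient hadd hsmul hU).toSetoid y y') :
    (syntacticQuotient hadd hsmul hU).toSetoid (add x y) (add x' y') := by
  refine DiscreteQuotient.trans _ _ _ _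
    (syntacticQuotient_rel_add_right hassoc hsmul_add hx y) ?_
  simpa only [hcomm x'] using syntacticQuotient_rel_add_right hassoc hsmul_add hy x'

theorem syntacticQuotient_rel_smul {mul : R → R → R}
    (hmul_smul : ∀ r s x, smul (mul r s) x = smul r (smul s x))
    {x y : M} (h : (syntacticQuotient hadd hsmul hU).toSetoid x y) (s : R) :
    (syntacticQuotient hadd hsmul hU).toSetoid (smul s x) (smul s y) := by
  obtain ⟨-, -, hsmul', hsmul_add'⟩ := syntacticQuotient_rel_iff.mp h
  refine syntacticQuotient_rel_iff.mpr ⟨hsmul' s, hsmul_add' s, fun r => ?_, fun r a => ?_⟩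
  · simpa only [hmul_smul] using hsmul' (mul r s)
  · simpa only [hmul_smul] using hsmul_add' (mul r s) a

end Syntactic

theorem statement14_general (R : Type) [tR : TopologicalSpace R] [CompactSpace R]
    (addR : R → R → R) (mulR : R → R → R)
    (M : Type) [tM : TopologicalSpace M]
    (addM : M → M → M) (T : R → M → M)
    (haM : ∀ x y z : M, addM (addM x y) z = addM x (addM y z))
    (hcM : ∀ x y : M, addM x y = addM y x)
    (hT1 : ∀ (r : R) (x y : M), T r (addM x y) = addM (T r x) (T r y))
    (hT2 : ∀ (r s : R) (x : M), T (addR r s) x = addM (T r x) (T s x))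
    (hT3 : ∀ (r s : R) (x : M), T (mulR r s) x = T r (T s x))
    (hcaM : Continuous fun p : M × M => addM p.1 p.2)
    (hcT : Continuous fun p : R × M => T p.1 p.2) :
    (CompactSpace M ∧ ∀ x y : M, x ≠ y →
        ∃ (N : Type) (addN : N → N → N) (S : R → N → N) (φ : M → N),
          Finite N ∧
          (∀ x y z : N, addN (addN x y) z = addN x (addN y z)) ∧
          (∀ x y : N, addN x y = addN y x) ∧
          (∀ (r : R) (x y : N), S r (addN x y) = addN (S r x) (S r y)) ∧
          (∀ (r s : R) (x : N), S (addR r s) x = addN (S r x) (S s x)) ∧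
          (∀ (r s : R) (x : N), S (mulR r s) x = S r (S s x)) ∧
          @Continuous (R × N) N (@instTopologicalSpaceProd R N tR ⊥) ⊥
            (fun p => S p.1 p.2) ∧
          @Continuous M N tM ⊥ φ ∧
          (∀ x y : M, φ (addM x y) = addN (φ x) (φ y)) ∧
          (∀ (r : R) (x : M), φ (T r x) = S r (φ x)) ∧
          φ x ≠ φ y) ↔
      (CompactSpace M ∧ T2Space M ∧ TotallyDisconnectedSpace M) := by
  constructor
  · rintro ⟨hM, hsep⟩
    have : TotallySeparatedSpace M :=
      totallySeparatedSpace_of_forall_ne_exists_continuous_bot fun x y hxy =>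
        let ⟨N, _, _, φ, _, _, _, _, _, _, _, hφ, _, _, hne⟩ := hsep x y hxy
        ⟨N, φ, hφ, hne⟩
    exact ⟨hM, inferInstance, inferInstance⟩
  · rintro ⟨hM, _, _⟩
    refine ⟨hM, fun x₀ y₀ hne => ?_⟩
    obtain ⟨U, hU, hx₀, hy₀⟩ := exists_isClopen_of_totally_separated hne
    set D := syntacticQuotient hcaM hcT hU
    let addN : D → D → D := Quotient.map₂ addM fun _ _ hx _ _ hy =>
      syntacticQuotient_rel_add haM hcM hT1 hx hy
    let S : R → D → D := fun r => Quotient.map (T r) fun _ _ h =>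
      syntacticQuotient_rel_smul hT3 h r
    have hbot : (inferInstance : TopologicalSpace D) = ⊥ := DiscreteTopology.eq_bot
    refine ⟨D, addN, S, D.proj, inferInstance, ?_, ?_, ?_, ?_, ?_, ?_, ?_,
      fun _ _ => rfl, fun _ _ => rfl, ?_⟩
    · exact fun a b c => Quotient.inductionOn₃ a b c fun x y z => congrArg D.proj (haM x y z)
    · exact fun a b => Quotient.inductionOn₂ a b fun x y => congrArg D.proj (hcM x y)
    · exact fun r a b => Quotient.inductionOn₂ a b fun x y => congrArg D.proj (hT1 r x y)
    · exact fun r s a => Quotient.inductionOn a fun x => congrArg D.proj (hT2 r s x)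
    · exact fun r s a => Quotient.inductionOn a fun x => congrArg D.proj (hT3 r s x)
    · rw [← hbot]
      refine continuous_prod_of_discrete_right.mpr ?_
      rintro ⟨x⟩
      exact D.proj_continuous.comp (hcT.comp (continuous_id.prodMk continuous_const))
    · rw [← hbot]
      exact D.proj_continuous
    · exact fun h => hy₀ ((syntacticQuotient_rel_iff.mp (Quotient.exact h)).1.mp hx₀)

/-- A topological semimodule `M` over a compact Hausdorff topological semiring `R` is
profinite — compact and residually finite via continuous homomorphisms onto finite
discrete semimodules over `R` — iff `M` is a totally disconnected compact Hausdorff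
space. -/
theorem statement14 (R : Type) [tR : TopologicalSpace R] [CompactSpace R] [T2Space R]
    (addR : R → R → R) (mulR : R → R → R)
    (haddA : ∀ x y z : R, addR (addR x y) z = addR x (addR y z))
    (haddC : ∀ x y : R, addR x y = addR y x)
    (hmulA : ∀ x y z : R, mulR (mulR x y) z = mulR x (mulR y z))
    (hdl : ∀ x y z : R, mulR x (addR y z) = addR (mulR x y) (mulR x z))
    (hdr : ∀ x y z : R, mulR (addR x y) z = addR (mulR x z) (mulR y z))
    (hcaR : Continuous fun p : R × R => addR p.1 p.2)
    (hcmR : Continuous fun p : R × R => mulR p.1 p.2)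
    (M : Type) [tM : TopologicalSpace M]
    (addM : M → M → M) (T : R → M → M)
    (haM : ∀ x y z : M, addM (addM x y) z = addM x (addM y z))
    (hcM : ∀ x y : M, addM x y = addM y x)
    (hT1 : ∀ (r : R) (x y : M), T r (addM x y) = addM (T r x) (T r y))
    (hT2 : ∀ (r s : R) (x : M), T (addR r s) x = addM (T r x) (T s x))
    (hT3 : ∀ (r s : R) (x : M), T (mulR r s) x = T r (T s x))
    (hcaM : Continuous fun p : M × M => addM p.1 p.2)
    (hcT : Continuous fun p : R × M => T p.1 p.2) :
    (CompactSpace M ∧ ∀ x y : M, x ≠ y →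
        ∃ (N : Type) (addN : N → N → N) (S : R → N → N) (φ : M → N),
          Finite N ∧
          (∀ x y z : N, addN (addN x y) z = addN x (addN y z)) ∧
          (∀ x y : N, addN x y = addN y x) ∧
          (∀ (r : R) (x y : N), S r (addN x y) = addN (S r x) (S r y)) ∧
          (∀ (r s : R) (x : N), S (addR r s) x = addN (S r x) (S s x)) ∧
          (∀ (r s : R) (x : N), S (mulR r s) x = S r (S s x)) ∧
          @Continuous (R × N) N (@instTopologicalSpaceProd R N tR ⊥) ⊥
            (fun p => S p.1 p.2) ∧
          @Continuous M N tM ⊥ φ ∧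
          (∀ x y : M, φ (addM x y) = addN (φ x) (φ y)) ∧
          (∀ (r : R) (x : M), φ (T r x) = S r (φ x)) ∧
          φ x ≠ φ y) ↔
      (CompactSpace M ∧ T2Space M ∧ TotallyDisconnectedSpace M) :=
  statement14_general R (tR := tR) addR mulR M (tM := tM) addM T haM hcM hT1 hT2 hT3 hcaM hcT
end

section
/- Let Ω be a compact continuous signature and 𝐀 an affinely bounded compact Hausdorff topological Ω-algebra. If 𝐀 is simple (every non-constant continuous homomorphism of 𝐀 into a Hausdorff topological Ω-algebra is injective), then the carrier A is connected or finite. -/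
/-- Ω-polynomials over `A` in a single variable `x`. -/
inductive PolyTerm (Ω : ℕ → Type) (A : Type) : Type
  | var : PolyTerm Ω A
  | const : A → PolyTerm Ω A
  | app : (n : ℕ) → Ω n → (Fin n → PolyTerm Ω A) → PolyTerm Ω A

namespace PolyTerm

/-- Number of occurrences of the variable `x`; a term is linear in `x` iff this is `1`. -/
def varCount {Ω : ℕ → Type} {A : Type} : PolyTerm Ω A → ℕ
  | .var => 1
  | .const _ => 0
  | .app n _ ts => ∑ i : Fin n, varCount (ts i)

/-- The height of a term (constants and the variable have height `0`). -/
def height {Ω : ℕ → Type} {A : Type} : PolyTerm Ω A → ℕ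
  | .var => 0
  | .const _ => 0
  | .app n _ ts => if n = 0 then 0 else (Finset.univ.sup fun i : Fin n => height (ts i)) + 1

/-- The arity of a term. -/
def arity {Ω : ℕ → Type} {A : Type} : PolyTerm Ω A → ℕ
  | .var => 0
  | .const _ => 0
  | .app n _ ts => max n (Finset.univ.sup fun i : Fin n => arity (ts i))

/-- Evaluation of a polynomial as a unary function on `A` (the map `Ψ_𝐀`). -/
def eval {Ω : ℕ → Type} {A : Type} (E : ∀ n, Ω n → (Fin n → A) → A) :
    PolyTerm Ω A → A → A
  | .var, z => z
  | .const a, _ => a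
  | .app n ω ts, z => E n ω fun i => eval E (ts i) z

end PolyTerm

/-- `𝐀 = (A, E)` is affinely bounded by `m`: the translation monoid consists exactly of the
evaluations of linear `Ω`-polynomials over `A` in one variable of height `≤ m` and arity
`≤ m`. -/
def AffinelyBoundedBy {Ω : ℕ → Type} {A : Type} (E : ∀ n, Ω n → (Fin n → A) → A)
    (m : ℕ) : Prop :=
  {f : A → A | InTransMonoid E f} =
    {f : A → A | ∃ t : PolyTerm Ω A,
      t.varCount = 1 ∧ t.height ≤ m ∧ t.arity ≤ m ∧ f = PolyTerm.eval E t}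

/-- `𝐀` is affinely bounded if it is affinely bounded by some `m ∈ ℕ`. -/
def AffinelyBounded {Ω : ℕ → Type} {A : Type} (E : ∀ n, Ω n → (Fin n → A) → A) : Prop :=
  ∃ m : ℕ, AffinelyBoundedBy E m

/-- A Hausdorff topological `Ω`-algebra is simple if every non-constant continuous
homomorphism into a Hausdorff topological `Ω`-algebra is injective. -/
def IsSimple (Ω : ℕ → Type) [∀ n, TopologicalSpace (Ω n)]
    (A : Type) [TopologicalSpace A] (E : ∀ n, Ω n → (Fin n → A) → A) : Prop :=
  ∀ (B : Type) [TopologicalSpace B] [T2Space B]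
    (E' : ∀ n, Ω n → (Fin n → B) → B),
    (∀ n, Continuous fun p : Ω n × (Fin n → B) => E' n p.1 p.2) →
    ∀ φ : A → B, Continuous φ →
      (∀ (n : ℕ) (ω : Ω n) (a : Fin n → A), φ (E n ω a) = E' n ω fun i => φ (a i)) →
      (¬ ∀ x y : A, φ x = φ y) → Function.Injective φ

open Topology

theorem continuous_sum_prod_dom {X Y Z W : Type*} [TopologicalSpace X] [TopologicalSpace Y]
    [TopologicalSpace Z] [TopologicalSpace W] {f : (X ⊕ Y) × Z → W} :
    Continuous f ↔ Continuous (fun p : X × Z => f (.inl p.1, p.2)) ∧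
      Continuous (fun p : Y × Z => f (.inr p.1, p.2)) := by
  rw [← (Homeomorph.sumProdDistrib (X := X) (Y := Y) (Z := Z)).symm.comp_continuous_iff',
    continuous_sum_dom]
  rfl

theorem continuous_sigma_prod_dom {ι : Type*} {X : ι → Type*} {Z W : Type*}
    [∀ i, TopologicalSpace (X i)] [TopologicalSpace Z] [TopologicalSpace W]
    {f : (Σ i, X i) × Z → W} :
    Continuous f ↔ ∀ i, Continuous fun p : X i × Z => f (⟨i, p.1⟩, p.2) := by
  rw [← (Homeomorph.sigmaProdDistrib (X := X) (Y := Z)).symm.comp_continuous_iff',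
    continuous_sigma_iff]
  rfl

theorem Setoid.rel_apply_of_forall_rel_update {ι α : Type*} [Fintype ι] [DecidableEq ι]
    (s : Setoid α) {F : (ι → α) → α}
    (hF : ∀ (a : ι → α) (i : ι) (x y : α), s x y → s (F (Function.update a i x))
      (F (Function.update a i y)))
    {a b : ι → α} (hab : ∀ i, s (a i) (b i)) : s (F a) (F b) := by
  suffices key : ∀ S : Finset ι, s (F a) (F (S.piecewise b a)) by
    simpa using key Finset.univ
  intro S
  induction S using Finset.induction_on with
  | empty => simp
  | insert j S hj ih =>
    have step := hF (S.piecewise b a) j (a j) (b j) (hab j)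
    have unchanged : Function.update (S.piecewise b a) j (a j) = S.piecewise b a :=
      Function.update_eq_self_iff.mpr (Finset.piecewise_eq_of_notMem _ _ _ hj).symm
    rw [unchanged] at step
    rw [Finset.piecewise_insert]
    exact s.trans ih step

theorem IsClopen.isLocallyConstant_preimage_prodMk {T X : Type*} [TopologicalSpace T]
    [CompactSpace T] [TopologicalSpace X] {K : Set (T × X)} (hK : IsClopen K) :
    IsLocallyConstant fun x : X => (·, x) ⁻¹' K := by
  refine (IsLocallyConstant.iff_eventually_eq _).2 fun x => ?_
  have hcont : Continuous fun c : T => (c, x) := by fun_prop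
  have tube {L : Set (T × X)} (hL : IsClopen L) : ∀ᶠ y in 𝓝 x, (·, x) ⁻¹' L ⊆ (·, y) ⁻¹' L := by
    obtain ⟨u, v, -, hv, hsu, hxv, hsub⟩ := generalized_tube_lemma
      (hL.1.preimage hcont).isCompact isCompact_singleton hL.2 (by rintro ⟨c, _⟩ ⟨hc, rfl⟩; exact hc)
    exact Filter.mem_of_superset (hv.mem_nhds (hxv rfl)) fun y hy c hc => hsub ⟨hsu hc, hy⟩
  filter_upwards [tube hK, tube hK.compl] with y hin hout
  exact Set.Subset.antisymm (fun c hc => not_not.1 fun h => hout h hc) hin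

/-- Codes of `Ω`-polynomials of nesting depth `≤ h` whose operation symbols have arity `≤ m`.
Unlike in `PolyTerm.height`, a nullary symbol has depth `1`, hence the shift in
`exists_eval_eq_polyTermEval`. -/
def TermCode (Ω : ℕ → Type) (A : Type) (m : ℕ) : ℕ → Type
  | 0 => Unit ⊕ A
  | h + 1 => TermCode Ω A m h ⊕ Σ n : Fin (m + 1), Ω n × (Fin n → TermCode Ω A m h)

namespace TermCode

variable {Ω : ℕ → Type} {A : Type} {m : ℕ}

instance instTopologicalSpace [∀ n, TopologicalSpace (Ω n)] [TopologicalSpace A] :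
    ∀ h, TopologicalSpace (TermCode Ω A m h)
  | 0 => inferInstanceAs (TopologicalSpace (Unit ⊕ A))
  | h + 1 =>
    letI := instTopologicalSpace h
    inferInstanceAs (TopologicalSpace
      (TermCode Ω A m h ⊕ Σ n : Fin (m + 1), Ω n × (Fin n → TermCode Ω A m h)))

instance instCompactSpace [∀ n, TopologicalSpace (Ω n)] [∀ n, CompactSpace (Ω n)]
    [TopologicalSpace A] [CompactSpace A] : ∀ h, CompactSpace (TermCode Ω A m h)
  | 0 => inferInstanceAs (CompactSpace (Unit ⊕ A))
  | h + 1 =>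
    letI := instCompactSpace h
    inferInstanceAs (CompactSpace
      (TermCode Ω A m h ⊕ Σ n : Fin (m + 1), Ω n × (Fin n → TermCode Ω A m h)))

def var : ∀ h, TermCode Ω A m h
  | 0 => .inl ()
  | h + 1 => .inl (var h)

def const (a : A) : ∀ h, TermCode Ω A m h
  | 0 => .inr a
  | h + 1 => .inl (const a h)

def eval (E : ∀ n, Ω n → (Fin n → A) → A) : ∀ {h}, TermCode Ω A m h → A → A
  | 0, .inl _, x => x
  | 0, .inr a, _ => a
  | _ + 1, .inl c, x => eval E c x
  | _ + 1, .inr ⟨n, ω, cs⟩, x => E n ω fun i => eval E (cs i) x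

variable (E : ∀ n, Ω n → (Fin n → A) → A)

@[simp]
theorem eval_var : ∀ h, eval E (var (Ω := Ω) (m := m) h) = id
  | 0 => rfl
  | h + 1 => eval_var h

@[simp]
theorem eval_const (a : A) : ∀ h, eval E (const (Ω := Ω) (m := m) a h) = fun _ => a
  | 0 => rfl
  | h + 1 => eval_const a h

theorem continuous_eval [∀ n, TopologicalSpace (Ω n)] [TopologicalSpace A]
    (hE : ∀ n, Continuous fun p : Ω n × (Fin n → A) => E n p.1 p.2) :
    ∀ h, Continuous fun p : TermCode Ω A m h × A => eval E p.1 p.2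
  | 0 => continuous_sum_prod_dom.2 ⟨continuous_snd, continuous_fst⟩
  | h + 1 => by
    have ih := continuous_eval hE h
    refine continuous_sum_prod_dom.2 ⟨ih, continuous_sigma_prod_dom.2 fun n => ?_⟩
    refine (hE n).comp ((continuous_fst.comp continuous_fst).prodMk (continuous_pi fun i => ?_))
    exact ih.comp (f := fun p : (Ω n × (Fin n → TermCode Ω A m h)) × A => (p.1.2 i, p.2))
      (by fun_prop)

theorem exists_eval_eq_polyTermEval (t : PolyTerm Ω A) :
    ∀ {h : ℕ}, t.height < h → t.arity ≤ m →
      ∃ c : TermCode Ω A m h, eval E c = PolyTerm.eval E t := by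
  induction t with
  | var => exact fun {h} _ _ => ⟨var h, eval_var E h⟩
  | const a => exact fun {h} _ _ => ⟨const a h, eval_const E a h⟩
  | app n ω ts ih =>
    rintro (_ | h) hh ha
    · exact absurd hh (Nat.not_lt_zero _)
    rw [PolyTerm.arity, max_le_iff, Finset.sup_le_iff] at ha
    have hts : ∀ i, (ts i).height < h := by
      intro i
      have hn : n ≠ 0 := fun hn => by subst hn; exact i.elim0
      rw [PolyTerm.height, if_neg hn] at hh
      exact lt_of_le_of_lt (Finset.le_sup (f := fun i => (ts i).height) (Finset.mem_univ i))
        (by omega)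
    choose cs hcs using fun i => ih i (hts i) (ha.2 i (Finset.mem_univ i))
    refine ⟨.inr ⟨⟨n, by omega⟩, ω, cs⟩, funext fun x => ?_⟩
    simp only [eval, PolyTerm.eval, hcs]

end TermCode

theorem AffinelyBoundedBy.exists_termCode_eval_eq {Ω : ℕ → Type} {A : Type}
    {E : ∀ n, Ω n → (Fin n → A) → A} {m : ℕ} (hm : AffinelyBoundedBy E m) {f : A → A}
    (hf : InTransMonoid E f) : ∃ c : TermCode Ω A m (m + 1), TermCode.eval E c = f := by
  have hf' : f ∈ {f : A → A | InTransMonoid E f} := hf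
  rw [hm] at hf'
  obtain ⟨t, -, hh, ha, rfl⟩ := hf'
  exact TermCode.exists_eval_eq_polyTermEval E t (Nat.lt_succ_of_le hh) ha

theorem InTransMonoid.comp_translation {Ω : ℕ → Type} {A : Type}
    {E : ∀ n, Ω n → (Fin n → A) → A} {f g : A → A}
    (hf : InTransMonoid E f) (hg : IsTranslation E g) : InTransMonoid E (f ∘ g) := by
  induction hf with
  | id => exact (InTransMonoid.comp hg .id : InTransMonoid E (g ∘ fun x => x))
  | comp hg' _ ih => exact (InTransMonoid.comp hg' ih :)

def syntacticSetoid {Ω : ℕ → Type} {A : Type} (E : ∀ n, Ω n → (Fin n → A) → A) (U : Set A) :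
    Setoid A where
  r x y := ∀ f, InTransMonoid E f → (f x ∈ U ↔ f y ∈ U)
  iseqv :=
    ⟨fun _ _ _ => Iff.rfl, fun h f hf => (h f hf).symm, fun h₁ h₂ f hf => (h₁ f hf).trans (h₂ f hf)⟩

section syntacticSetoid

variable {Ω : ℕ → Type} {A : Type} {E : ∀ n, Ω n → (Fin n → A) → A} {U : Set A}

theorem syntacticSetoid_apply {n : ℕ} (ω : Ω n) {a b : Fin n → A}
    (hab : ∀ i, syntacticSetoid E U (a i) (b i)) :
    syntacticSetoid E U (E n ω a) (E n ω b) := by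
  refine Setoid.rel_apply_of_forall_rel_update _ (fun a i x y hxy f hf => ?_) hab
  exact hxy (f ∘ fun z => E n ω (Function.update a i z)) (hf.comp_translation ⟨n, ω, i, a, rfl⟩)

theorem not_syntacticSetoid_of_mem_of_notMem {x y : A} (hx : x ∈ U) (hy : y ∉ U) :
    ¬ syntacticSetoid E U x y :=
  fun h => hy ((h id .id).1 hx)

end syntacticSetoid

theorem isLocallyConstant_quotient_mk_syntacticSetoid {Ω : ℕ → Type} {A : Type}
    [TopologicalSpace A] {E : ∀ n, Ω n → (Fin n → A) → A} {T : Type*} [TopologicalSpace T]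
    [CompactSpace T] {ev : T → A → A} (hev : Continuous fun p : T × A => ev p.1 p.2)
    (hM : ∀ f, InTransMonoid E f → ∃ c, ev c = f) {U : Set A} (hU : IsClopen U) :
    IsLocallyConstant (Quotient.mk (syntacticSetoid E U)) := by
  have hK : IsClopen {p : T × A | ev p.1 p.2 ∈ U} := hU.preimage hev
  refine (IsLocallyConstant.iff_eventually_eq _).2 fun x => ?_
  filter_upwards [hK.isLocallyConstant_preimage_prodMk.eventually_eq x] with y hy
  refine Quotient.sound fun f hf => ?_
  obtain ⟨c, rfl⟩ := hM f hf
  exact Set.ext_iff.1 hy c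

theorem IsSimple.injective_quotient_mk {Ω : ℕ → Type} [∀ n, TopologicalSpace (Ω n)]
    {A : Type} [TopologicalSpace A] {E : ∀ n, Ω n → (Fin n → A) → A} (hA : IsSimple Ω A E)
    (hE : ∀ n, Continuous fun p : Ω n × (Fin n → A) => E n p.1 p.2) (s : Setoid A)
    (hs : ∀ n (ω : Ω n) {a b : Fin n → A}, (∀ i, s (a i) (b i)) → s (E n ω a) (E n ω b))
    (hlc : IsLocallyConstant (Quotient.mk s)) {x y : A} (hxy : ¬ s x y) :
    Function.Injective (Quotient.mk s) := by
  let : TopologicalSpace (Quotient s) := ⊥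
  have : DiscreteTopology (Quotient s) := ⟨rfl⟩
  refine hA (Quotient s) (fun n ω q => Quotient.mk s (E n ω fun i => (q i).out)) (fun n => ?_)
    _ hlc.continuous (fun n ω a => Quotient.sound (hs n ω fun i => ?_))
    fun h => hxy (Quotient.exact (h x y))
  · have hout : Continuous fun q : Fin n → Quotient s => fun i => (q i).out :=
      continuous_of_discreteTopology
    exact hlc.continuous.comp ((hE n).comp (continuous_fst.prodMk (hout.comp continuous_snd)))
  · exact s.symm (Quotient.mk_out (a i))

theorem statement16_general (Ω : ℕ → Type) [∀ n, TopologicalSpace (Ω n)]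
    [∀ n, CompactSpace (Ω n)]
    (A : Type) [TopologicalSpace A] [CompactSpace A]
    (E : ∀ n, Ω n → (Fin n → A) → A)
    (hE : ∀ n, Continuous fun p : Ω n × (Fin n → A) => E n p.1 p.2)
    (hbd : AffinelyBounded E) (hsimple : IsSimple Ω A E) :
    ConnectedSpace A ∨ Finite A := by
  rw [or_iff_not_imp_right, connectedSpace_iff_clopen]
  intro hinfinite
  have : Infinite A := not_finite_iff_infinite.1 hinfinite
  refine ⟨inferInstance, fun U hU => ?_⟩
  by_contra! hU'
  obtain ⟨x, hx⟩ := hU'.1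
  obtain ⟨y, hy⟩ := (Set.ne_univ_iff_exists_notMem U).1 hU'.2
  obtain ⟨m, hm⟩ := hbd
  have hlc := isLocallyConstant_quotient_mk_syntacticSetoid (TermCode.continuous_eval E hE (m + 1))
    (fun f hf => hm.exists_termCode_eval_eq hf) hU
  have hinj := hsimple.injective_quotient_mk hE _ (fun _ => syntacticSetoid_apply) hlc
    (not_syntacticSetoid_of_mem_of_notMem hx hy)
  have : Finite (Set.range (Quotient.mk (syntacticSetoid E U))) := hlc.range_finite.to_subtype
  exact hinfinite (Finite.of_injective_finite_range hinj)

/-- An affinely bounded simple compact Hausdorff topological algebra over a compact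
continuous signature is either connected or finite. -/
theorem statement16 (Ω : ℕ → Type) [∀ n, TopologicalSpace (Ω n)]
    [∀ n, CompactSpace (Ω n)]
    (A : Type) [TopologicalSpace A] [CompactSpace A] [T2Space A]
    (E : ∀ n, Ω n → (Fin n → A) → A)
    (hE : ∀ n, Continuous fun p : Ω n × (Fin n → A) => E n p.1 p.2)
    (hbd : AffinelyBounded E) (hsimple : IsSimple Ω A E) :
    ConnectedSpace A ∨ Finite A :=
  statement16_general Ω A E hE hbd hsimple
end

section
/- A compact Hausdorff topological algebra 𝐀 = (A, E) of type Ω is simple (every non-constant continuous homomorphism into a Hausdorff topological Ω-algebra of the same type is injective) if and only if Δ_A and A × A are the only closed congruences on 𝐀. -/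
/-- The quotient of a compact Hausdorff space by a closed equivalence relation is closed. -/
lemma closedMap_quotient_mk {A : Type} [TopologicalSpace A] [CompactSpace A] [T2Space A]
    (s : Setoid A) (hcl : IsClosed {p : A × A | s.r p.1 p.2}) :
    IsClosedMap (Quotient.mk s) := by
  intro C hC
  rw [← (isQuotientMap_quotient_mk' (s := s)).isClosed_preimage]
  have heq : Quotient.mk' ⁻¹' (Quotient.mk s '' C)
      = Prod.fst '' ({p : A × A | s.r p.1 p.2} ∩ Set.univ ×ˢ C) := by
    ext x
    constructor
    · rintro ⟨c, hcC, hc⟩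
      exact ⟨(x, c), ⟨Quotient.exact hc.symm, ⟨trivial, hcC⟩⟩, rfl⟩
    · rintro ⟨⟨x', c⟩, ⟨hr, -, hcC⟩, rfl⟩
      exact ⟨c, hcC, (Quotient.sound hr).symm⟩
  rw [heq]
  exact (((hcl.inter (isClosed_univ.prod hC)).isCompact).image continuous_fst).isClosed

lemma t2_quotient_of_closed {A : Type} [TopologicalSpace A] [CompactSpace A] [T2Space A]
    (s : Setoid A) (hcl : IsClosed {p : A × A | s.r p.1 p.2}) :
    T2Space (Quotient s) := by
  have hq := closedMap_quotient_mk s hcl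
  constructor
  intro x y hxy
  obtain ⟨a, rfl⟩ := Quotient.exists_rep x
  obtain ⟨b, rfl⟩ := Quotient.exists_rep y
  have hCa : IsClosed {z : A | s.r z a} :=
    hcl.preimage (continuous_id.prodMk continuous_const)
  have hCb : IsClosed {z : A | s.r z b} :=
    hcl.preimage (continuous_id.prodMk continuous_const)
  have hdisj : Disjoint {z : A | s.r z a} {z : A | s.r z b} := by
    rw [Set.disjoint_left]
    intro z hza hzb
    exact hxy (Quotient.sound (s.trans (s.symm hza) hzb))
  obtain ⟨U, V, hU, hV, hCaU, hCbV, hUV⟩ := normal_separation hCa hCb hdisj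
  refine ⟨(Quotient.mk s '' Uᶜ)ᶜ, (Quotient.mk s '' Vᶜ)ᶜ, ?_, ?_, ?_, ?_, ?_⟩
  · exact (hq _ hU.isClosed_compl).isOpen_compl
  · exact (hq _ hV.isClosed_compl).isOpen_compl
  · rintro ⟨z, hz, hza⟩
    exact hz (hCaU (Quotient.exact hza))
  · rintro ⟨z, hz, hzb⟩
    exact hz (hCbV (Quotient.exact hzb))
  · rw [Set.disjoint_left]
    rintro w hw1 hw2
    obtain ⟨c, rfl⟩ := Quotient.exists_rep w
    have hcU : c ∈ U := by
      by_contra h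
      exact hw1 ⟨c, h, rfl⟩
    have hcV : c ∈ V := by
      by_contra h
      exact hw2 ⟨c, h, rfl⟩
    exact hUV.le_bot ⟨hcU, hcV⟩

/-- A compact Hausdorff topological `Ω`-algebra is simple iff its only closed congruences
are the diagonal `Δ_A` and `A × A`. -/
theorem statement17 (Ω : ℕ → Type) [∀ n, TopologicalSpace (Ω n)]
    (A : Type) [TopologicalSpace A] [CompactSpace A] [T2Space A]
    (E : ∀ n, Ω n → (Fin n → A) → A)
    (hE : ∀ n, Continuous fun p : Ω n × (Fin n → A) => E n p.1 p.2) :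
    IsSimple Ω A E ↔
      ∀ θ : A → A → Prop, IsCongruence E θ → IsClosed {p : A × A | θ p.1 p.2} →
        (∀ x y : A, θ x y ↔ x = y) ∨ (∀ x y : A, θ x y) := by
  constructor
  · -- simple → trivial closed congruences
    intro hs θ hθ hclosed
    obtain ⟨hequiv, hcong⟩ := hθ
    set s : Setoid A := ⟨θ, hequiv⟩ with hs_def
    haveI : T2Space (Quotient s) := t2_quotient_of_closed s hclosed
    set q : A → Quotient s := Quotient.mk s with hq_def
    have hqcont : Continuous q := continuous_quotient_mk'
    have hqsurj : Function.Surjective q := Quotient.exists_rep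
    -- induced operations
    set E' : ∀ n, Ω n → (Fin n → Quotient s) → Quotient s :=
      fun n ω b => q (E n ω fun i => (b i).out) with hE'_def
    have hkey : ∀ (n : ℕ) (ω : Ω n) (a : Fin n → A),
        E' n ω (fun i => q (a i)) = q (E n ω a) := by
      intro n ω a
      exact Quotient.sound (hcong n ω _ _ fun i => Quotient.exact (Quotient.out_eq (q (a i))))
    have hE'cont : ∀ n, Continuous fun p : Ω n × (Fin n → Quotient s) =>
        E' n p.1 p.2 := by
      intro n
      have hqproper : IsProperMap q := hqcont.isProperMap
      have hF : IsProperMap (fun p : Ω n × (Fin n → A) =>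
          ((p.1, fun i => q (p.2 i)) : Ω n × (Fin n → Quotient s))) :=
        isProperMap_id.prodMap (IsProperMap.pi_map fun _ => hqproper)
      have hFsurj : Function.Surjective (fun p : Ω n × (Fin n → A) =>
          ((p.1, fun i => q (p.2 i)) : Ω n × (Fin n → Quotient s))) := by
        rintro ⟨ω, b⟩
        refine ⟨⟨ω, fun i => (b i).out⟩, ?_⟩
        simp only [Prod.mk.injEq, true_and]
        funext i
        exact Quotient.out_eq (b i)
      have hFquot := hF.isClosedMap.isQuotientMap hF.continuous hFsurj
      rw [hFquot.continuous_iff]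
      have : (fun p : Ω n × (Fin n → A) => E' n p.1 fun i => q (p.2 i))
          = fun p => q (E n p.1 p.2) := by
        funext p
        exact hkey n p.1 p.2
      show Continuous fun p : Ω n × (Fin n → A) => E' n p.1 fun i => q (p.2 i)
      rw [this]
      exact hqcont.comp (hE n)
    by_cases hconst : ∀ x y : A, q x = q y
    · right
      intro x y
      exact Quotient.exact (hconst x y)
    · left
      have hinj := hs (Quotient s) E' hE'cont q hqcont
        (fun n ω a => (hkey n ω a).symm) hconst
      intro x y
      constructor
      · intro hxy
        exact hinj (Quotient.sound hxy)
      · rintro rfl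
        exact hequiv.refl x
  · -- trivial closed congruences → simple
    intro htriv
    intro B _ _ E' hE' φ hφ hhom hnonconst
    set θ : A → A → Prop := fun x y => φ x = φ y with hθ_def
    have hcong : IsCongruence E θ := by
      refine ⟨⟨fun _ => rfl, fun h => h.symm, fun h h' => h.trans h'⟩, ?_⟩
      intro n ω a b hab
      show φ (E n ω a) = φ (E n ω b)
      rw [hhom, hhom]
      congr 1
      funext i
      exact hab i
    have hclosed : IsClosed {p : A × A | θ p.1 p.2} :=
      isClosed_eq (hφ.comp continuous_fst) (hφ.comp continuous_snd)
    rcases htriv θ hcong hclosed with h | h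
    · intro x y hxy
      exact (h x y).mp hxy
    · exact absurd (fun x y => h x y) hnonconst
end

section
/- Let A = αℤ be the one-point (Alexandroff) compactification of the discrete integers, and let f : A → A be the homeomorphism with f(∞) = ∞ and f(z) = z+1 for z ∈ ℤ. Then the topological algebra (A, f) with single unary operation f is not residually finite: every continuous homomorphism from (A, f) into a finite discrete algebra with one unary operation is constant. -/
open OnePoint

/-- Let `A = αℤ` be the one-point compactification of the discrete integers and `f` the
extension of the successor map fixing `∞`. Then every continuous homomorphism from
`(A, f)` into a finite discrete algebra with one unary operation is constant; in
particular `(A, f)` is not residually finite. -/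
theorem statement18 (f : OnePoint ℤ → OnePoint ℤ)
    (hfi : f ∞ = ∞) (hfz : ∀ z : ℤ, f (z : OnePoint ℤ) = ((z + 1 : ℤ) : OnePoint ℤ)) :
    ∀ (B : Type) [TopologicalSpace B] [Finite B] [DiscreteTopology B]
      (g : B → B) (φ : OnePoint ℤ → B),
      Continuous φ → (∀ x, φ (f x) = g (φ x)) → ∀ x y, φ x = φ y := by
  intro B _ _ _ g φ hc hhom
  set c := φ ∞ with hcdef
  -- g fixes c
  have hgc : g c = c := by
    have := hhom ∞
    rw [hfi] at this
    exact this.symm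
  have hgnc : ∀ n : ℕ, g^[n] c = c := by
    intro n
    induction n with
    | zero => rfl
    | succ k ih => rw [Function.iterate_succ_apply', ih, hgc]
  -- iteration formula
  have hiter : ∀ (z : ℤ) (n : ℕ), φ ((z + n : ℤ) : OnePoint ℤ) = g^[n] (φ (z : OnePoint ℤ)) := by
    intro z n
    induction n with
    | zero => simp
    | succ k ih =>
      have h1 := hhom ((z + k : ℤ) : OnePoint ℤ)
      rw [hfz] at h1
      have : (z + (k + 1 : ℕ) : ℤ) = (z + k) + 1 := by push_cast; ring
      rw [this, h1, ih, Function.iterate_succ_apply']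
  -- the preimage of {c} is open and contains ∞
  have hU : IsOpen (φ ⁻¹' {c}) := hc.isOpen_preimage _ (isOpen_discrete _)
  have hmem : ∞ ∈ φ ⁻¹' {c} := rfl
  rw [OnePoint.isOpen_iff_of_mem hmem] at hU
  have hfin : (((↑) : ℤ → OnePoint ℤ) ⁻¹' (φ ⁻¹' {c}))ᶜ.Finite := hU.2.finite_of_discrete
  -- every z maps to c
  have key : ∀ x : OnePoint ℤ, φ x = c := by
    intro x
    cases x with
    | infty => rfl
    | coe z =>
      obtain ⟨m, hm⟩ := ((Set.Iic_infinite z).diff hfin).nonempty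
      have hmz : m ≤ z := hm.1
      have hmc : φ ((m : ℤ) : OnePoint ℤ) = c := by
        have := hm.2
        simp only [Set.mem_compl_iff, not_not] at this
        exact this
      have hz : z = m + ((z - m).toNat : ℤ) := by omega
      show φ ((z : ℤ) : OnePoint ℤ) = c
      rw [hz, hiter, hmc, hgnc]
  intro x y
  rw [key x, key y]
end

section
/- Let A = αℤ be the one-point compactification of the discrete integers and f(z) = z+1, f(∞) = ∞. The topological algebra 𝐀 = (A, {f, f⁻¹}) with the two continuous unary operations f and f⁻¹ has the property that its only closed congruences are the diagonal Δ_A and A × A; hence 𝐀 is an infinite, totally disconnected, simple compact Hausdorff topological algebra. -/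
open OnePoint Filter Topology

/-!
A congruence invariant under `z ↦ z ± 1` is invariant under every translation `z ↦ z + m`.
If it relates two distinct integers `a` and `b = a + d`, then by translating and chaining it
relates `a` to every `a + k d`; these tend to `∞`, so a closed congruence relates `a` to `∞`.
Translating this pair (translations fix `∞`) relates every integer to `∞`, so the congruence
is all of `A × A`. The remaining case, a pair `(a, ∞)` with `a` an integer, is the same.
-/

theorem OnePoint.tendsto_coe_infty_of_injective {X : Type*} [TopologicalSpace X]
    [DiscreteTopology X] {u : ℕ → X} (hu : u.Injective) :
    Tendsto (fun n ↦ (u n : OnePoint X)) atTop (𝓝 ∞) :=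
  (tendsto_coe_infty.mono_left cocompact_le_coclosedCompact).comp <| by
    rw [cocompact_eq_cofinite, ← Nat.cofinite_eq_atTop]
    exact hu.tendsto_cofinite

theorem OnePoint.map_add_add {X : Type*} [AddSemigroup X] (m n : X) (x : OnePoint X) :
    OnePoint.map (· + m) (OnePoint.map (· + n) x) = OnePoint.map (· + (n + m)) x := by
  induction x using OnePoint.rec <;> simp [add_assoc]

section Translation

variable {θ : OnePoint ℤ → OnePoint ℤ → Prop}

theorem rel_map_add_of_rel_map_succ_pred
    (hsucc : ∀ x y, θ x y → θ (OnePoint.map (· + 1) x) (OnePoint.map (· + 1) y))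
    (hpred : ∀ x y, θ x y → θ (OnePoint.map (· - 1) x) (OnePoint.map (· - 1) y))
    (m : ℤ) {x y : OnePoint ℤ} (h : θ x y) :
    θ (OnePoint.map (· + m) x) (OnePoint.map (· + m) y) := by
  induction m using Int.induction_on with
  | zero => simpa [← Function.id_def] using h
  | succ k ih => simpa only [OnePoint.map_add_add] using hsucc _ _ ih
  | pred k ih =>
    simpa only [sub_eq_add_neg, OnePoint.map_add_add] using hpred _ _ ih

variable (hθ : Equivalence θ)
    (htranslate : ∀ m : ℤ, ∀ x y, θ x y → θ (OnePoint.map (· + m) x) (OnePoint.map (· + m) y))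
include hθ htranslate

theorem rel_coe_infty_of_rel_coe {a b : ℤ} (hab : a ≠ b)
    (hclosed : IsClosed {p : OnePoint ℤ × OnePoint ℤ | θ p.1 p.2}) (h : θ a b) : θ a ∞ := by
  set d := b - a
  have hd : d ≠ 0 := sub_ne_zero.mpr hab.symm
  have hchain : ∀ k : ℕ, θ a ((a + k * d : ℤ) : OnePoint ℤ) := by
    intro k
    induction k with
    | zero => simpa using hθ.refl (a : OnePoint ℤ)
    | succ k ih =>
      have hnext := htranslate (k * d) a b h
      have hb : b + k * d = a + (k + 1 : ℕ) * d := by push_cast [d]; ring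
      simp only [OnePoint.map_some, hb] at hnext
      exact hθ.trans ih hnext
  have hlim : Tendsto (fun k : ℕ ↦ ((a + k * d : ℤ) : OnePoint ℤ)) atTop (𝓝 ∞) :=
    OnePoint.tendsto_coe_infty_of_injective fun i j hij ↦ by
      simpa [hd] using hij
  exact hclosed.mem_of_tendsto (tendsto_const_nhds.prodMk_nhds hlim)
    (Eventually.of_forall hchain)

theorem forall_rel_of_rel_coe_infty {a : ℤ} (h : θ a ∞) (x y : OnePoint ℤ) : θ x y := by
  have hinfty : ∀ z, θ z ∞ := by
    intro z
    induction z using OnePoint.rec with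
    | infty => exact hθ.refl ∞
    | coe z => simpa using htranslate (z - a) a ∞ h
  exact hθ.trans (hinfty x) (hθ.symm (hinfty y))

end Translation

/-- Let `A = αℤ` be the one-point compactification of the discrete integers, and let `f`
(resp. `g`) be the homeomorphism extending `z ↦ z + 1` (resp. its inverse `z ↦ z - 1`),
fixing `∞`. The topological algebra `(A, {f, g})` has no closed congruences other than
the diagonal and `A × A`; hence it is an infinite, totally disconnected, simple compact
Hausdorff topological algebra. -/
theorem statement19 (f g : OnePoint ℤ → OnePoint ℤ)
    (hfi : f ∞ = ∞) (hfz : ∀ z : ℤ, f (z : OnePoint ℤ) = ((z + 1 : ℤ) : OnePoint ℤ))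
    (hgi : g ∞ = ∞) (hgz : ∀ z : ℤ, g (z : OnePoint ℤ) = ((z - 1 : ℤ) : OnePoint ℤ)) :
    (∀ θ : OnePoint ℤ → OnePoint ℤ → Prop, Equivalence θ →
        IsClosed {p : OnePoint ℤ × OnePoint ℤ | θ p.1 p.2} →
        (∀ x y, θ x y → θ (f x) (f y)) → (∀ x y, θ x y → θ (g x) (g y)) →
        (∀ x y, θ x y ↔ x = y) ∨ (∀ x y, θ x y)) ∧
      Infinite (OnePoint ℤ) ∧ TotallyDisconnectedSpace (OnePoint ℤ) ∧
      CompactSpace (OnePoint ℤ) ∧ T2Space (OnePoint ℤ) := by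
  refine ⟨?_, inferInstance, inferInstance, inferInstance, inferInstance⟩
  intro θ hθ hclosed hf hg
  have hf' : f = OnePoint.map (· + 1) := funext fun x ↦ x.rec hfi hfz
  have hg' : g = OnePoint.map (· - 1) := funext fun x ↦ x.rec hgi hgz
  subst hf' hg'
  have htranslate := @rel_map_add_of_rel_map_succ_pred θ hf hg
  by_cases hdiag : ∀ x y, θ x y ↔ x = y
  · exact .inl hdiag
  right
  obtain ⟨x, y, hxy, hne⟩ : ∃ x y, θ x y ∧ x ≠ y := by
    by_contra! h
    exact hdiag fun x y ↦ ⟨h x y, fun hxy ↦ hxy ▸ hθ.refl x⟩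
  obtain ⟨a, ha⟩ : ∃ a : ℤ, θ a ∞ := by
    induction x using OnePoint.rec <;> induction y using OnePoint.rec
    · exact absurd rfl hne
    · exact ⟨_, hθ.symm hxy⟩
    · exact ⟨_, hxy⟩
    · exact ⟨_, rel_coe_infty_of_rel_coe hθ htranslate (by simpa using hne) hclosed hxy⟩
  exact forall_rel_of_rel_coe_infty hθ htranslate ha
end
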